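/- arXiv:1409.6537 — 5 statements merged into one kernel-verified Lean document; each statement's English description precedes it below -/
import Mathlib

section
/- For all positive integers h and k, (k/h)^h ≤ n(h,k), where n(h,k) is the largest N such that some set A of k non-negative integers is an h-basis for [0,N]. Equivalently, there exists a set A with |A| ≤ k and 0 ∈ A such that every integer in [0, ⌊k/h⌋^h - 1] is a sum of h elements of A. -/
/-!
Write `m = ⌊k/h⌋`. Every `z < m^h` has `h` base-`m` digits `d_i`, so `z = ∑_{i<h} d_i m^i` is a sum
of `h` elements of `{j m^i : j < m, i < h}`, a set with at most `h m ≤ k` elements. Adjoining `0`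
costs nothing, since `0 = 0 · m^0` already lies in the set when it is nonempty.
-/

open Finset

theorem sum_range_div_pow_mod_mul_pow (m h z : ℕ) :
    ∑ i ∈ range h, z / m ^ i % m * m ^ i = z % m ^ h := by
  induction h with
  | zero => simp [Nat.mod_one]
  | succ n ih =>
    rw [sum_range_succ, ih, pow_succ, Nat.mod_mul]
    ring

def digitBasis (m h : ℕ) : Finset ℕ :=
  insert 0 ((range h ×ˢ range m).image fun p => p.2 * m ^ p.1)

theorem zero_mem_digitBasis (m h : ℕ) : 0 ∈ digitBasis m h :=
  mem_insert_self _ _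

theorem mul_pow_mem_digitBasis {m h i j : ℕ} (hi : i < h) (hj : j < m) :
    j * m ^ i ∈ digitBasis m h :=
  mem_insert_of_mem <| mem_image.2 ⟨(i, j), by simp [hi, hj], rfl⟩

theorem card_digitBasis_le (m h : ℕ) : #(digitBasis m h) ≤ max 1 (h * m) := by
  rcases Nat.eq_zero_or_pos (h * m) with hhm | hhm
  · have hempty : range h ×ˢ range m = ∅ := by
      rw [← card_eq_zero, card_product, card_range, card_range, hhm]
    simp [digitBasis, hempty]
  · obtain ⟨hh, hm⟩ := CanonicallyOrderedAdd.mul_pos.1 hhm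
    have hzero : 0 ∈ (range h ×ˢ range m).image fun p => p.2 * m ^ p.1 :=
      mem_image.2 ⟨(0, 0), by simp [hh, hm], by simp⟩
    calc #(digitBasis m h)
        = #((range h ×ˢ range m).image fun p => p.2 * m ^ p.1) := by
          rw [digitBasis, insert_eq_of_mem hzero]
      _ ≤ #(range h ×ˢ range m) := card_image_le
      _ = h * m := by simp
      _ ≤ max 1 (h * m) := le_max_right _ _

theorem exists_sum_digitBasis_eq {m h z : ℕ} (hz : z < m ^ h) :
    ∃ f : Fin h → ℕ, (∀ i, f i ∈ digitBasis m h) ∧ ∑ i, f i = z := by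
  refine ⟨fun i => z / m ^ (i : ℕ) % m * m ^ (i : ℕ), fun i => ?_, ?_⟩
  · have hm : 0 < m := Nat.pos_of_ne_zero fun hm0 => by
      simp [hm0, Nat.pos_iff_ne_zero.1 (i.pos)] at hz
    exact mul_pow_mem_digitBasis i.2 (Nat.mod_lt _ hm)
  · rw [Fin.sum_univ_eq_sum_range (fun i => z / m ^ i % m * m ^ i),
      sum_range_div_pow_mod_mul_pow, Nat.mod_eq_of_lt hz]

theorem stmt2_general (h k : ℕ) (hk : 0 < k) :
    ∃ A : Finset ℕ, A.card ≤ k ∧ 0 ∈ A ∧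
      ∀ z ≤ (k / h) ^ h - 1, ∃ f : Fin h → ℕ, (∀ i, f i ∈ A) ∧ ∑ i, f i = z := by
  refine ⟨digitBasis (k / h) h, ?_, zero_mem_digitBasis _ _, fun z hz => ?_⟩
  · exact (card_digitBasis_le _ _).trans (max_le hk (Nat.mul_div_le k h))
  · rcases Nat.eq_zero_or_pos z with rfl | hz0
    · exact ⟨0, fun _ => zero_mem_digitBasis _ _, by simp⟩
    · exact exists_sum_digitBasis_eq (by omega)

/-- For all positive integers `h` and `k`, `(k/h)^h ≤ n(h,k)`: there exists a set
`A` with `|A| ≤ k` and `0 ∈ A` such that every integer in `[0, ⌊k/h⌋^h - 1]` is a sum of `h`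
elements of `A`. -/
theorem stmt2 (h k : ℕ) (hh : 0 < h) (hk : 0 < k) :
    ∃ A : Finset ℕ, A.card ≤ k ∧ 0 ∈ A ∧
      ∀ z ≤ (k / h) ^ h - 1, ∃ f : Fin h → ℕ, (∀ i, f i ∈ A) ∧ ∑ i, f i = z :=
  stmt2_general h k hk
end

section
/- Let G be a finite abelian group of order q, and let A, B be subsets of G with A nonempty. For any non-negative integer t, there exists a subset X ⊆ G with |X| ≤ t such that |B \ (A + X)| ≤ (1 - |A|/q)^t · |B|, where A + X = {a + x : a ∈ A, x ∈ X}. -/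
open Pointwise

lemma stmt5_key {G : Type*} [AddCommGroup G] [Fintype G] [DecidableEq G]
    (A B' : Finset G) (hA : A.Nonempty) :
    ∃ x : G, ((B' \ (A + {x})).card : ℝ) ≤
      (1 - (A.card : ℝ) / Fintype.card G) * B'.card := by
  have hq0 : 0 < Fintype.card G := Fintype.card_pos
  -- counting
  have hsum : ∑ x : G, (B' ∩ (A + {x})).card = A.card * B'.card := by
    have h1 : ∀ x : G, (B' ∩ (A + {x})).card
        = ∑ b ∈ B', if b ∈ A + ({x} : Finset G) then 1 else 0 := by
      intro x
      rw [← Finset.filter_mem_eq_inter, Finset.card_filter]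
    simp_rw [h1]
    rw [Finset.sum_comm]
    have h2 : ∀ b : G, (∑ x : G, if b ∈ A + ({x} : Finset G) then 1 else 0) = A.card := by
      intro b
      rw [← Finset.card_filter]
      have : Finset.univ.filter (fun x => b ∈ A + ({x} : Finset G))
          = A.image (fun a => b - a) := by
        ext x
        simp only [Finset.mem_filter, Finset.mem_univ, true_and, Finset.mem_image,
          Finset.mem_add, Finset.mem_singleton]
        constructor
        · rintro ⟨a, ha, y, rfl, rfl⟩
          exact ⟨a, ha, by abel⟩
        · rintro ⟨a, ha, rfl⟩
          exact ⟨a, ha, b - a, rfl, by abel⟩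
      rw [this, Finset.card_image_of_injective _ (fun a b h => by
        have := sub_right_injective h; exact this)]
    simp_rw [h2]
    rw [Finset.sum_const, smul_eq_mul, mul_comm]
  -- pick maximizer
  obtain ⟨x, -, hxmax⟩ := Finset.exists_max_image Finset.univ
    (fun x : G => (B' ∩ (A + {x})).card) ⟨(0:G), Finset.mem_univ _⟩
  have hav : A.card * B'.card ≤ Fintype.card G * (B' ∩ (A + {x})).card := by
    calc A.card * B'.card = ∑ y : G, (B' ∩ (A + {y})).card := hsum.symm
    _ ≤ ∑ _y : G, (B' ∩ (A + {x})).card :=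
        Finset.sum_le_sum (fun y _ => hxmax y (Finset.mem_univ y))
    _ = Fintype.card G * (B' ∩ (A + {x})).card := by
        rw [Finset.sum_const, Finset.card_univ, smul_eq_mul]
  refine ⟨x, ?_⟩
  have hcard : ((B' \ (A + {x})).card : ℝ)
      = (B'.card : ℝ) - ((B' ∩ (A + {x})).card : ℝ) := by
    have := Finset.card_sdiff_add_card_inter B' (A + {x})
    have := congrArg (fun n : ℕ => (n : ℝ)) this
    push_cast at this
    linarith
  have hav' : (A.card : ℝ) * B'.card ≤ (Fintype.card G : ℝ) * (B' ∩ (A + {x})).card := by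
    exact_mod_cast hav
  have hq0' : (0:ℝ) < (Fintype.card G : ℝ) := by exact_mod_cast hq0
  rw [hcard]
  rw [sub_mul, one_mul, div_mul_eq_mul_div, sub_le_sub_iff_left, div_le_iff₀ hq0']
  nlinarith

/-- Let `G` be a finite abelian group of order `q`, `A, B ⊆ G` with `A` nonempty.
For any `t : ℕ` there exists `X ⊆ G` with `|X| ≤ t` and
`|B \ (A + X)| ≤ (1 - |A|/q)^t · |B|`. -/
theorem stmt5 {G : Type*} [AddCommGroup G] [Fintype G] [DecidableEq G]
    (q : ℕ) (hq : Fintype.card G = q) (A B : Finset G) (hA : A.Nonempty) (t : ℕ) :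
    ∃ X : Finset G, X.card ≤ t ∧
      ((B \ (A + X)).card : ℝ) ≤ (1 - (A.card : ℝ) / q) ^ t * B.card := by
  subst hq
  have hq0 : 0 < Fintype.card G := Fintype.card_pos
  have hc0 : (0:ℝ) ≤ 1 - (A.card : ℝ) / Fintype.card G := by
    have hAle : A.card ≤ Fintype.card G := A.card_le_univ
    have : (A.card : ℝ) ≤ Fintype.card G := by exact_mod_cast hAle
    have hq0' : (0:ℝ) < (Fintype.card G : ℝ) := by exact_mod_cast hq0
    rw [sub_nonneg, div_le_one hq0']
    exact this
  induction t with
  | zero => exact ⟨∅, le_refl _, by simp⟩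
  | succ t ih =>
    obtain ⟨X, hXcard, hXbound⟩ := ih
    obtain ⟨x, hx⟩ := stmt5_key A (B \ (A + X)) hA
    refine ⟨X ∪ {x}, ?_, ?_⟩
    · calc (X ∪ {x}).card ≤ X.card + ({x} : Finset G).card := Finset.card_union_le _ _
      _ ≤ t + 1 := by simp; omega
    · have hsub : B \ (A + (X ∪ {x})) ⊆ (B \ (A + X)) \ (A + {x}) := by
        intro b hb
        rw [Finset.add_union] at hb
        simp only [Finset.mem_sdiff, Finset.mem_union] at hb ⊢
        tauto
      have h1' : ((B \ (A + (X ∪ {x}))).card : ℝ)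
          ≤ (((B \ (A + X)) \ (A + {x})).card : ℝ) := by
        exact_mod_cast Finset.card_le_card hsub
      have h2 : (1 - (A.card : ℝ) / Fintype.card G) * ((B \ (A + X)).card : ℝ)
          ≤ (1 - (A.card : ℝ) / Fintype.card G)
            * ((1 - (A.card : ℝ) / Fintype.card G) ^ t * B.card) :=
        mul_le_mul_of_nonneg_left hXbound hc0
      have h3 : (1 - (A.card : ℝ) / Fintype.card G)
            * ((1 - (A.card : ℝ) / Fintype.card G) ^ t * B.card)
          = (1 - (A.card : ℝ) / Fintype.card G) ^ (t+1) * B.card := by ring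
      linarith [hx]
end

section
/- Let G be a finite abelian group of order q > 1 and A a nonempty subset of G. Then there exists X ⊆ G with |X| ≤ ⌈(q · log q)/|A|⌉ such that A + X = G. -/
open Pointwise Finset

private lemma my_mem {G : Type*} [AddCommGroup G] [Fintype G] [DecidableEq G]
    (A : Finset G) (x b : G) : b ∈ A + ({x} : Finset G) ↔ b - x ∈ A := by
  simp only [Finset.mem_add, Finset.mem_singleton]
  constructor
  · rintro ⟨a, ha, c, rfl, rfl⟩; simpa using ha
  · intro h; exact ⟨b - x, h, x, rfl, by abel⟩

private lemma my_count {G : Type*} [AddCommGroup G] [Fintype G] [DecidableEq G]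
    (A B : Finset G) :
    ∑ x : G, (B ∩ (A + {x})).card = A.card * B.card := by
  calc ∑ x : G, (B ∩ (A + {x})).card
      = ∑ x : G, ∑ b ∈ B, if b - x ∈ A then 1 else 0 := by
        refine Finset.sum_congr rfl fun x _ => ?_
        rw [← Finset.sum_filter, Finset.sum_const, smul_eq_mul, mul_one]
        congr 1
        ext b
        simp [my_mem]
    _ = ∑ b ∈ B, ∑ x : G, if b - x ∈ A then 1 else 0 := Finset.sum_comm
    _ = ∑ b ∈ B, A.card := by
        refine Finset.sum_congr rfl fun b _ => ?_
        rw [← Finset.sum_filter, Finset.sum_const, smul_eq_mul, mul_one]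
        have h : Finset.univ.filter (fun x => b - x ∈ A) = A.image (fun a => b - a) := by
          ext y
          simp only [Finset.mem_filter, Finset.mem_univ, true_and, Finset.mem_image]
          constructor
          · intro h; exact ⟨b - y, h, by abel⟩
          · rintro ⟨a, ha, rfl⟩; simpa using ha
        rw [h, Finset.card_image_of_injective _ (fun u v h => by
          simpa using congrArg (fun z => b - z) h)]
    _ = A.card * B.card := by rw [Finset.sum_const, smul_eq_mul, mul_comm]

private lemma my_step {G : Type*} [AddCommGroup G] [Fintype G] [DecidableEq G]
    (A B : Finset G) :
    ∃ x : G, ((B \ (A + {x})).card : ℝ) ≤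
      B.card * (1 - A.card / Fintype.card G) := by
  have hq0 : (0 : ℝ) < Fintype.card G := Nat.cast_pos.mpr Fintype.card_pos
  -- average argument
  have havg : ∃ x : G, A.card * B.card ≤ Fintype.card G * (B ∩ (A + {x})).card := by
    by_contra hcon
    push_neg at hcon
    have h1 : ∑ x : G, Fintype.card G * (B ∩ (A + {x})).card
        = Fintype.card G * (A.card * B.card) := by
      rw [← Finset.mul_sum, my_count]
    have h2 : ∑ x : G, Fintype.card G * (B ∩ (A + {x})).card
        < ∑ _x : G, A.card * B.card := by
      apply Finset.sum_lt_sum_of_nonempty Finset.univ_nonempty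
      intro x _
      exact hcon x
    rw [h1, Finset.sum_const, smul_eq_mul, Finset.card_univ] at h2
    exact lt_irrefl _ h2
  obtain ⟨x, hx⟩ := havg
  refine ⟨x, ?_⟩
  have hcard : (B \ (A + {x})).card + (B ∩ (A + {x})).card = B.card :=
    by rw [Finset.card_sdiff_add_card_inter]
  have hxR : (A.card : ℝ) * B.card ≤ Fintype.card G * (B ∩ (A + {x})).card := by
    exact_mod_cast hx
  have hBR : ((B \ (A + {x})).card : ℝ) = B.card - (B ∩ (A + {x})).card := by
    rw [eq_sub_iff_add_eq]
    exact_mod_cast hcard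
  rw [hBR]
  have : (A.card : ℝ) * B.card / Fintype.card G ≤ (B ∩ (A + {x})).card := by
    rw [div_le_iff₀ hq0]
    linarith [hxR]
  have hexp : (B.card : ℝ) * (1 - A.card / Fintype.card G)
      = B.card - A.card * B.card / Fintype.card G := by ring
  rw [hexp]
  linarith

private lemma my_iter {G : Type*} [AddCommGroup G] [Fintype G] [DecidableEq G]
    (A : Finset G) (hA1 : A.card ≤ Fintype.card G) (t : ℕ) :
    ∃ X : Finset G, X.card ≤ t ∧
      ((Finset.univ \ (A + X)).card : ℝ) ≤
        Fintype.card G * (1 - A.card / Fintype.card G) ^ t := by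
  have hq0 : (0 : ℝ) < Fintype.card G := by exact_mod_cast Fintype.card_pos
  have hα : (0 : ℝ) ≤ 1 - A.card / Fintype.card G := by
    have : (A.card : ℝ) / Fintype.card G ≤ 1 := by
      rw [div_le_one hq0]; exact_mod_cast hA1
    linarith
  induction t with
  | zero =>
    refine ⟨∅, le_refl _, ?_⟩
    simp [Finset.card_univ]
  | succ t ih =>
    obtain ⟨X, hXc, hXb⟩ := ih
    obtain ⟨x, hx⟩ := my_step A (Finset.univ \ (A + X))
    refine ⟨insert x X, ?_, ?_⟩
    · calc (insert x X).card ≤ X.card + 1 := Finset.card_insert_le x X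
        _ ≤ t + 1 := by omega
    · have hset : Finset.univ \ (A + insert x X)
          = (Finset.univ \ (A + X)) \ (A + {x}) := by
        rw [Finset.insert_eq, Finset.add_union]
        ext y
        simp only [Finset.mem_sdiff, Finset.mem_univ, true_and, Finset.mem_union]
        tauto
      rw [hset]
      calc ((( Finset.univ \ (A + X)) \ (A + {x})).card : ℝ)
          ≤ (Finset.univ \ (A + X)).card * (1 - A.card / Fintype.card G) := hx
        _ ≤ (Fintype.card G * (1 - A.card / Fintype.card G) ^ t)
              * (1 - A.card / Fintype.card G) :=
            mul_le_mul_of_nonneg_right hXb hα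
        _ = Fintype.card G * (1 - A.card / Fintype.card G) ^ (t + 1) := by ring

/-- Let `G` be a finite abelian group of order `q > 1` and `A` a nonempty subset.
Then there exists `X ⊆ G` with `|X| ≤ ⌈(q · log q)/|A|⌉` and `A + X = G`. -/
theorem stmt7 {G : Type*} [AddCommGroup G] [Fintype G] [DecidableEq G]
    (q : ℕ) (hq : Fintype.card G = q) (hq1 : 1 < q) (A : Finset G) (hA : A.Nonempty) :
    ∃ X : Finset G, X.card ≤ ⌈(q * Real.log q) / A.card⌉₊ ∧ A + X = Finset.univ := by
  subst hq
  set q := Fintype.card G with hqdef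
  have hq0 : (0 : ℝ) < q := by exact_mod_cast Nat.lt_of_lt_of_le Nat.zero_lt_one hq1.le
  have hA0 : 0 < A.card := Finset.card_pos.mpr hA
  have hA0R : (0 : ℝ) < A.card := by exact_mod_cast hA0
  have hA1 : A.card ≤ q := Finset.card_le_univ A
  have hlog : 0 < Real.log q := Real.log_pos (by exact_mod_cast hq1)
  set t := ⌈(q * Real.log q) / A.card⌉₊ with ht
  obtain ⟨X, hXc, hXb⟩ := my_iter A hA1 t
  refine ⟨X, hXc, ?_⟩
  -- show uncovered set is empty
  set α : ℝ := A.card / q with hα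
  have hα0 : 0 < α := div_pos hA0R hq0
  have hα1 : α ≤ 1 := by rw [hα, div_le_one hq0]; exact_mod_cast hA1
  have ht1 : 1 ≤ t := by
    rw [ht]
    exact Nat.one_le_iff_ne_zero.mpr (by
      rw [Ne, Nat.ceil_eq_zero, not_le]
      positivity)
  have htle : (q * Real.log q) / A.card ≤ t := Nat.le_ceil _
  have hkey : α * t ≥ Real.log q := by
    have h1 : α * ((q * Real.log q) / A.card) = Real.log q := by
      rw [hα]; field_simp
    nlinarith [mul_le_mul_of_nonneg_left htle hα0.le]
  have hexp1 : 1 - α < Real.exp (-α) := by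
    have := Real.add_one_lt_exp (x := -α) (by linarith)
    linarith
  have hpow : (1 - α) ^ t < Real.exp (-α) ^ t := by
    apply pow_lt_pow_left₀ hexp1 (by linarith) (by omega)
  have hpow2 : Real.exp (-α) ^ t ≤ 1 / q := by
    rw [← Real.exp_nat_mul]
    have : (t : ℝ) * (-α) ≤ -Real.log q := by nlinarith
    calc Real.exp ((t : ℝ) * (-α)) ≤ Real.exp (-Real.log q) := Real.exp_le_exp.mpr this
      _ = 1 / q := by rw [Real.exp_neg, Real.exp_log hq0, one_div]
  have hfin : (q : ℝ) * (1 - α) ^ t < 1 := by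
    calc (q : ℝ) * (1 - α) ^ t < q * (1 / q) := by
          apply mul_lt_mul_of_pos_left _ hq0
          exact lt_of_lt_of_le hpow hpow2
      _ = 1 := by field_simp
  have hzero : (Finset.univ \ (A + X)).card = 0 := by
    by_contra hne
    have h1 : (1 : ℝ) ≤ (Finset.univ \ (A + X)).card := by
      exact_mod_cast Nat.one_le_iff_ne_zero.mpr hne
    have := lt_of_le_of_lt (le_trans h1 hXb) hfin
    exact lt_irrefl _ this
  have hsub : Finset.univ ⊆ A + X := by
    rw [← Finset.sdiff_eq_empty_iff_subset]
    exact Finset.card_eq_zero.mp hzero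
  exact Finset.univ_subset_iff.mp hsub
end

section
/- Let G be a finite abelian group of order q > 1 and A a nonempty subset of G with |A| = α. Then there exist subsets X_1, ..., X_k of G with |X_i| ≤ ⌈((q log q)/α)^{1/k}⌉ for i < k and |X_k| ≤ ⌈((q log q)/α)^{1/k}⌉ + ⌈log q⌉, such that A + X_1 + ... + X_k = G. In particular the minimal size of a k-complement of A to G satisfies ∂^k(A,G) ≤ k·⌈((q log q)/α)^{1/k}⌉ + ⌈log q⌉. -/
open Pointwise

section Helpers
open Finset

variable {G : Type*} [AddCommGroup G] [Fintype G] [DecidableEq G]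

lemma mem_add_single (S : Finset G) (x u : G) : u ∈ S + {x} ↔ u - x ∈ S := by
  simp only [Finset.mem_add, Finset.mem_singleton]
  constructor
  · rintro ⟨b, hb, c, rfl, rfl⟩; simpa using hb
  · intro h; exact ⟨u - x, h, x, rfl, sub_add_cancel u x⟩

lemma key_count (S U : Finset G) :
    ∑ x : G, ((U ∩ (S + {x})).card) = U.card * S.card := by
  have : ∀ x : G, (U ∩ (S + {x})).card = ∑ u ∈ U, if u - x ∈ S then 1 else 0 := by
    intro x
    rw [← Finset.sum_filter]
    simp only [Finset.sum_const, smul_eq_mul, mul_one]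
    congr 1
    ext u
    simp [mem_add_single]
  simp only [this]
  rw [Finset.sum_comm]
  rw [Finset.card_eq_sum_ones U, Finset.sum_mul]
  refine Finset.sum_congr rfl fun u _ => ?_
  rw [one_mul, ← Finset.sum_filter]
  simp only [Finset.sum_const, smul_eq_mul, mul_one]
  apply Finset.card_bij' (fun x _ => u - x) (fun s _ => u - s)
  · intro a ha; simp at ha ⊢; exact ha
  · intro a ha; simp; exact ha
  · intro a _; simp
  · intro a _; simp

set_option maxHeartbeats 1000000 in
lemma exists_translate (S U : Finset G) :
    ∃ x : G, ((U \ (S + {x})).card : ℝ) ≤ U.card * (1 - S.card / Fintype.card G) := by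
  have hne : Nonempty G := ⟨0⟩
  have hq : (0 : ℝ) < Fintype.card G := by exact_mod_cast Fintype.card_pos
  have havg : ∃ x : G, (U.card * S.card : ℝ) / Fintype.card G ≤ ((U ∩ (S + {x})).card : ℝ) := by
    have hsum : ∑ _x : G, (U.card * S.card : ℝ) / Fintype.card G
        ≤ ∑ x : G, ((U ∩ (S + {x})).card : ℝ) := by
      rw [Finset.sum_const, Finset.card_univ, nsmul_eq_mul, mul_div_cancel₀ _ (ne_of_gt hq)]
      have : ∑ x : G, ((U ∩ (S + {x})).card : ℝ) = ((∑ x : G, (U ∩ (S + {x})).card : ℕ) : ℝ) := by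
        push_cast; rfl
      rw [this, key_count]; push_cast; exact le_refl _
    obtain ⟨x, _, hx⟩ := Finset.exists_le_of_sum_le (Finset.univ_nonempty (α := G)) hsum
    exact ⟨x, hx⟩
  obtain ⟨x, hx⟩ := havg
  refine ⟨x, ?_⟩
  have hSc : ((S + {x}).card : ℝ) = S.card := by
    rw [Finset.add_singleton]
    simp
  rw [← hSc] at hx ⊢
  generalize (S + {x}) = T at hx ⊢
  have hcard : (U \ T).card + (U ∩ T).card = U.card :=
    Finset.card_sdiff_add_card_inter U T
  have : ((U \ T).card : ℝ) = U.card - (U ∩ T).card := by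
    have := congrArg (Nat.cast : ℕ → ℝ) hcard
    push_cast at this
    linarith
  rw [this]
  have : (U.card : ℝ) * T.card / Fintype.card G ≤ ((U ∩ T).card : ℝ) := by
    calc (U.card : ℝ) * T.card / Fintype.card G = (U.card * T.card : ℝ) / Fintype.card G := by ring
      _ ≤ _ := hx
  have expand : (U.card : ℝ) * (1 - T.card / Fintype.card G) = U.card - U.card * T.card / Fintype.card G := by ring
  rw [expand]
  linarith

lemma multi_step (S : Finset G) (t : ℕ) (ht : 1 ≤ t) :
    ∃ X : Finset G, X.Nonempty ∧ X.card ≤ t ∧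
      ((Finset.univ \ (S + X)).card : ℝ) ≤
        (Fintype.card G) * (((Finset.univ \ S).card : ℝ) / Fintype.card G) ^ t := by
  have hne : Nonempty G := ⟨0⟩
  have hq : (0 : ℝ) < Fintype.card G := by exact_mod_cast Fintype.card_pos
  have hratio : ∀ T : Finset G, (1 : ℝ) - T.card / Fintype.card G
      = ((Finset.univ \ T).card : ℝ) / Fintype.card G := by
    intro T
    have h1 : (Finset.univ \ T).card = Fintype.card G - T.card := Finset.card_univ_diff T
    have h2 : T.card ≤ Fintype.card G := Finset.card_le_univ T
    have : ((Finset.univ \ T).card : ℝ) = Fintype.card G - T.card := by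
      rw [h1]; push_cast [h2]; ring
    rw [this]; field_simp
  induction t with
  | zero => omega
  | succ n ih =>
    rcases Nat.eq_zero_or_pos n with hn | hn
    · subst hn
      refine ⟨{0}, Finset.singleton_nonempty 0, by simp, ?_⟩
      have : S + {0} = S := by
        rw [Finset.add_singleton]; simp
      rw [this, pow_one, mul_div_cancel₀ _ (ne_of_gt hq)]
    · obtain ⟨X, hXne, hXc, hXb⟩ := ih hn
      obtain ⟨x, hx⟩ := exists_translate S (Finset.univ \ (S + X))
      refine ⟨X ∪ {x}, hXne.mono Finset.subset_union_left, ?_, ?_⟩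
      · calc (X ∪ {x}).card ≤ X.card + ({x} : Finset G).card := Finset.card_union_le _ _
          _ ≤ n + 1 := by simpa using hXc
      · have hsplit : Finset.univ \ (S + (X ∪ {x}))
            = (Finset.univ \ (S + X)) \ (S + {x}) := by
          rw [Finset.add_union]
          ext g
          simp only [Finset.mem_sdiff, Finset.mem_union, Finset.mem_univ, true_and]
          tauto
        rw [hsplit]
        calc ((Finset.univ \ (S + X)) \ (S + {x}) |>.card : ℝ)
            ≤ ((Finset.univ \ (S + X)).card : ℝ) * (1 - S.card / Fintype.card G) := hx
          _ ≤ ((Fintype.card G) * (((Finset.univ \ S).card : ℝ) / Fintype.card G) ^ n)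
                * (((Finset.univ \ S).card : ℝ) / Fintype.card G) := by
              rw [hratio S] at *
              apply mul_le_mul hXb le_rfl
              · positivity
              · positivity
          _ = (Fintype.card G) * (((Finset.univ \ S).card : ℝ) / Fintype.card G) ^ (n + 1) := by
              ring

lemma iter_step (n : ℕ) (t : Fin n → ℕ) (ht : ∀ i, 1 ≤ t i) (S : Finset G) (hS : S.Nonempty) :
    ∃ X : Fin n → Finset G, (∀ i, (X i).card ≤ t i) ∧ (S + ∑ i, X i).Nonempty ∧
      ((Finset.univ \ (S + ∑ i, X i)).card : ℝ) ≤
        (Fintype.card G) * (((Finset.univ \ S).card : ℝ) / Fintype.card G) ^ (∏ i, t i) := by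
  have hne : Nonempty G := ⟨0⟩
  have hq : (0 : ℝ) < Fintype.card G := by exact_mod_cast Fintype.card_pos
  induction n with
  | zero =>
    refine ⟨fun i => i.elim0, fun i => i.elim0, ?_, ?_⟩
    · simpa using hS
    · simp [pow_one, mul_div_cancel₀ _ (ne_of_gt hq)]
  | succ n ih =>
    obtain ⟨X', hX'c, hX'ne, hX'b⟩ := ih (fun i => t i.castSucc) (fun i => ht _)
    obtain ⟨Y, hYne, hYc, hYb⟩ := multi_step (S + ∑ i, X' i) (t (Fin.last n)) (ht _)
    refine ⟨Fin.snoc X' Y, ?_, ?_, ?_⟩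
    · intro i
      refine Fin.lastCases ?_ ?_ i
      · simpa using hYc
      · intro j; simpa using hX'c j
    · have hsum : ∑ i, Fin.snoc X' Y i = (∑ i, X' i) + Y := by
        rw [Fin.sum_univ_castSucc]
        simp
      rw [hsum, ← add_assoc]
      exact hX'ne.add hYne
    · have hsum : ∑ i, Fin.snoc X' Y i = (∑ i, X' i) + Y := by
        rw [Fin.sum_univ_castSucc]
        simp
      have hprod : ∏ i, t i = (∏ i : Fin n, t i.castSucc) * t (Fin.last n) :=
        Fin.prod_univ_castSucc t
      rw [hsum, ← add_assoc, hprod]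
      calc ((Finset.univ \ (S + ∑ i, X' i + Y)).card : ℝ)
          ≤ (Fintype.card G) *
              (((Finset.univ \ (S + ∑ i, X' i)).card : ℝ) / Fintype.card G) ^ (t (Fin.last n)) := hYb
        _ ≤ (Fintype.card G) *
              ((((Finset.univ \ S).card : ℝ) / Fintype.card G) ^ (∏ i : Fin n, t i.castSucc)) ^ (t (Fin.last n)) := by
            apply mul_le_mul_of_nonneg_left _ (le_of_lt hq)
            apply pow_le_pow_left₀ (by positivity)
            rw [div_le_iff₀ hq]
            calc ((Finset.univ \ (S + ∑ i, X' i)).card : ℝ)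
                ≤ (Fintype.card G) * (((Finset.univ \ S).card : ℝ) / Fintype.card G) ^ (∏ i : Fin n, t i.castSucc) := hX'b
              _ = _ := by ring
        _ = (Fintype.card G) *
              (((Finset.univ \ S).card : ℝ) / Fintype.card G) ^ ((∏ i : Fin n, t i.castSucc) * t (Fin.last n)) := by
            rw [← pow_mul]

end Helpers

/-- `k`-complement bound: there exist `X_1, ..., X_k ⊆ G` with
`|X_i| ≤ ⌈((q log q)/α)^{1/k}⌉` for `i < k`, `|X_k| ≤ ⌈((q log q)/α)^{1/k}⌉ + ⌈log q⌉`,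
and `A + X_1 + ... + X_k = G`; in particular `∂^k(A,G) ≤ k·⌈((q log q)/α)^{1/k}⌉ + ⌈log q⌉`. -/
theorem stmt8 {G : Type*} [AddCommGroup G] [Fintype G] [DecidableEq G]
    (q : ℕ) (hq : Fintype.card G = q) (hq1 : 1 < q) (A : Finset G) (hA : A.Nonempty)
    (α k : ℕ) (hα : A.card = α) (hk : 0 < k) :
    ∃ X : Fin k → Finset G,
      (∀ i : Fin k, (i : ℕ) + 1 < k →
        (X i).card ≤ ⌈((q * Real.log q) / α) ^ ((1 : ℝ) / k)⌉₊) ∧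
      (∀ i : Fin k,
        (X i).card ≤ ⌈((q * Real.log q) / α) ^ ((1 : ℝ) / k)⌉₊ + ⌈Real.log q⌉₊) ∧
      A + ∑ i, X i = Finset.univ ∧
      (Finset.univ.biUnion X).card ≤
        k * ⌈((q * Real.log q) / α) ^ ((1 : ℝ) / k)⌉₊ + ⌈Real.log q⌉₊ := by
  obtain ⟨n, rfl⟩ : ∃ n, k = n + 1 := ⟨k - 1, by omega⟩
  simp only [Nat.cast_add, Nat.cast_one]
  set m : ℕ := ⌈((q * Real.log q) / α) ^ ((1 : ℝ) / ((n : ℝ) + 1))⌉₊ with hm_def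
  set L : ℕ := ⌈Real.log q⌉₊ with hL_def
  have hα0 : 0 < α := hα ▸ Finset.card_pos.mpr hA
  have hαq : α ≤ q := by rw [← hα, ← hq]; exact Finset.card_le_univ A
  have hq0 : (0 : ℝ) < q := by positivity
  have hlogq : 0 < Real.log q := Real.log_pos (by exact_mod_cast hq1)
  have hxpos : (0 : ℝ) < (q * Real.log q) / α := by positivity
  have hm1 : 1 ≤ m := Nat.ceil_pos.mpr (Real.rpow_pos_of_pos hxpos _)
  have hL1 : 1 ≤ L := Nat.ceil_pos.mpr hlogq
  have hmk : ((q : ℝ) * Real.log q) / α ≤ (m : ℝ) ^ (n + 1) := by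
    have h1 : ((q * Real.log q) / α : ℝ) ^ ((1 : ℝ) / ((n : ℝ) + 1)) ≤ (m : ℝ) := Nat.le_ceil _
    have h2 : (((q * Real.log q) / α : ℝ) ^ ((1 : ℝ) / ((n : ℝ) + 1))) ^ (n + 1)
        = ((q * Real.log q) / α : ℝ) := by
      rw [← Real.rpow_natCast (((q * Real.log q) / α : ℝ) ^ ((1 : ℝ) / ((n : ℝ) + 1))) (n + 1),
        ← Real.rpow_mul (le_of_lt hxpos)]
      push_cast
      rw [one_div, inv_mul_cancel₀ (by positivity : ((n : ℝ) + 1) ≠ 0), Real.rpow_one]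
    calc ((q : ℝ) * Real.log q) / α = _ := h2.symm
      _ ≤ (m : ℝ) ^ (n + 1) := pow_le_pow_left₀ (Real.rpow_nonneg (le_of_lt hxpos) _) h1 _
  set t : Fin (n + 1) → ℕ := fun i => if (i : ℕ) < n then m else m + L with ht_def
  have ht : ∀ i, 1 ≤ t i := by
    intro i; simp only [ht_def]; split <;> omega
  obtain ⟨X, hXc, hXne, hXb⟩ := iter_step (n + 1) t ht A hA
  rw [hq] at hXb
  have hprod : ∏ i, t i = m ^ n * (m + L) := by
    rw [Fin.prod_univ_castSucc]
    have h1 : ∀ i : Fin n, t i.castSucc = m := by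
      intro i; simp only [ht_def, Fin.coe_castSucc]; exact if_pos i.isLt
    have h2 : t (Fin.last n) = m + L := by
      simp only [ht_def, Fin.val_last]; exact if_neg (lt_irrefl n)
    rw [h2]
    congr 1
    rw [Finset.prod_congr rfl (fun i _ => h1 i), Finset.prod_const, Finset.card_univ,
      Fintype.card_fin]
  have hP : (q : ℝ) * Real.log q < α * ((∏ i, t i : ℕ) : ℝ) := by
    have hPnat : (m : ℝ) ^ (n + 1) + 1 ≤ ((∏ i, t i : ℕ) : ℝ) := by
      rw [hprod]
      push_cast
      have h1 : (1 : ℝ) ≤ (m : ℝ) ^ n := one_le_pow₀ (by exact_mod_cast hm1)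
      have h2 : (1 : ℝ) ≤ (L : ℝ) := by exact_mod_cast hL1
      have hpow : (m : ℝ) ^ (n + 1) = (m : ℝ) ^ n * m := pow_succ _ _
      nlinarith [pow_nonneg (by positivity : (0:ℝ) ≤ (m:ℝ)) n]
    have h3 : (q : ℝ) * Real.log q ≤ (m : ℝ) ^ (n + 1) * α :=
      (div_le_iff₀ (by positivity : (0:ℝ) < (α:ℝ))).mp hmk
    nlinarith [(by positivity : (0:ℝ) < (α:ℝ))]
  have hcovered : A + ∑ i, X i = Finset.univ := by
    have hu0 : ((Finset.univ \ A).card : ℝ) / q ≤ Real.exp (-((α : ℝ) / q)) := by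
      have h1 : ((Finset.univ \ A).card : ℝ) = q - α := by
        rw [Finset.card_univ_diff, hq, hα]
        push_cast [hαq]; ring
      rw [h1]
      have h2 : ((q : ℝ) - α) / q = -((α : ℝ) / q) + 1 := by field_simp; ring
      rw [h2]
      exact Real.add_one_le_exp _
    have hub : ((Finset.univ \ (A + ∑ i, X i)).card : ℝ) < 1 := by
      calc ((Finset.univ \ (A + ∑ i, X i)).card : ℝ)
          ≤ (q : ℝ) * (((Finset.univ \ A).card : ℝ) / q) ^ (∏ i, t i) := hXb
        _ ≤ (q : ℝ) * (Real.exp (-((α : ℝ) / q))) ^ (∏ i, t i) := by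
            apply mul_le_mul_of_nonneg_left _ (le_of_lt hq0)
            exact pow_le_pow_left₀ (by positivity) hu0 _
        _ = (q : ℝ) * Real.exp (-((α : ℝ) / q) * ((∏ i, t i : ℕ) : ℝ)) := by
            rw [← Real.exp_nat_mul]
            ring_nf
        _ < 1 := by
            have h3 : Real.log q < (α : ℝ) / q * ((∏ i, t i : ℕ) : ℝ) := by
              rw [div_mul_eq_mul_div, lt_div_iff₀ hq0]
              calc Real.log q * q = q * Real.log q := mul_comm _ _
                _ < α * ((∏ i, t i : ℕ) : ℝ) := hP
            have key : -((α : ℝ) / q) * ((∏ i, t i : ℕ) : ℝ) < -(Real.log q) := by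
              rw [neg_mul]; linarith
            calc (q : ℝ) * Real.exp (-((α : ℝ) / q) * ((∏ i, t i : ℕ) : ℝ))
                < (q : ℝ) * Real.exp (-(Real.log q)) :=
                  mul_lt_mul_of_pos_left (Real.exp_lt_exp.mpr key) hq0
              _ = 1 := by
                  rw [Real.exp_neg, Real.exp_log hq0]
                  field_simp
    have hub' : (Finset.univ \ (A + ∑ i, X i)).card < 1 := by exact_mod_cast hub
    have hempty : Finset.univ \ (A + ∑ i, X i) = ∅ :=
      Finset.card_eq_zero.mp (Nat.lt_one_iff.mp hub')
    exact Finset.univ_subset_iff.mp (Finset.sdiff_eq_empty_iff_subset.mp hempty)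
  refine ⟨X, ?_, ?_, hcovered, ?_⟩
  · intro i hi
    have hti : t i = m := by simp only [ht_def]; exact if_pos (by omega)
    exact hti ▸ hXc i
  · intro i
    have hti : t i ≤ m + L := by simp only [ht_def]; split <;> omega
    exact le_trans (hXc i) hti
  · calc (Finset.univ.biUnion X).card ≤ ∑ i, (X i).card := Finset.card_biUnion_le
      _ ≤ ∑ i, t i := Finset.sum_le_sum (fun i _ => hXc i)
      _ = (n + 1) * m + L := by
          rw [Fin.sum_univ_castSucc]
          have h1 : ∀ i : Fin n, t i.castSucc = m := by
            intro i; simp only [ht_def, Fin.coe_castSucc]; exact if_pos i.isLt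
          have h2 : t (Fin.last n) = m + L := by
            simp only [ht_def, Fin.val_last]; exact if_neg (lt_irrefl n)
          rw [h2, Finset.sum_congr rfl (fun i _ => h1 i), Finset.sum_const, Finset.card_univ,
            Fintype.card_fin, smul_eq_mul]
          ring
end

section
/- Let G be a finite abelian group of order q, A ⊆ G nonempty with |A| = α, and t a positive integer. Then there exists X ⊆ G with |X| ≤ t and |A + X| ≥ αt·(1 - αt/(2q)) when αt ≤ q. -/
open Pointwise

/-- Averaging step: some translate `A + {x}` covers at least an `α/q` fraction of the
complement of `A + X`. -/
private lemma stmt18_step {G : Type*} [AddCommGroup G] [Fintype G] [DecidableEq G]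
    (A X : Finset G) : ∃ x : G,
      A.card * (Fintype.card G - (A + X).card) ≤
        Fintype.card G * ((A + {x}) \ (A + X)).card := by
  set S := A + X with hS
  have hsum : ∑ x : G, ((A + {x}) \ S).card = A.card * (Fintype.card G - S.card) := by
    have h1 : ∀ x : G, ((A + {x}) \ S).card = ∑ s ∈ Sᶜ, if s ∈ A + {x} then 1 else 0 := by
      intro x
      rw [← Finset.card_filter]
      congr 1
      ext s
      simp only [Finset.mem_sdiff, Finset.mem_filter, Finset.mem_compl]
      tauto
    simp only [h1]
    rw [Finset.sum_comm]
    have h2 : ∀ s : G, ∑ x : G, (if s ∈ A + {x} then 1 else 0) = A.card := by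
      intro s
      rw [← Finset.card_filter]
      have : (Finset.univ.filter (fun x => s ∈ A + {x})) = A.image (fun a => s - a) := by
        ext x
        simp only [Finset.mem_filter, Finset.mem_univ, true_and, Finset.mem_image,
          Finset.mem_add, Finset.mem_singleton]
        constructor
        · rintro ⟨a, ha, b, rfl, hab⟩
          exact ⟨a, ha, by rw [← hab]; abel⟩
        · rintro ⟨a, ha, rfl⟩
          exact ⟨a, ha, s - a, rfl, by abel⟩
      rw [this, Finset.card_image_of_injective _ (fun a b h => by
        have := sub_right_injective h; exact this)]
    simp only [h2]
    rw [Finset.sum_const, Finset.card_compl, smul_eq_mul, mul_comm]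
  have hne : (Finset.univ : Finset G).Nonempty := Finset.univ_nonempty
  obtain ⟨x, -, hx⟩ := Finset.exists_le_of_sum_le hne (f := fun _ : G =>
      A.card * (Fintype.card G - S.card)) (g := fun x : G => Fintype.card G * ((A + {x}) \ S).card)
    (by
      rw [Finset.sum_const, Finset.card_univ, smul_eq_mul, ← Finset.mul_sum, hsum])
  exact ⟨x, hx⟩

/-- Let `G` be a finite abelian group of order `q`, `A ⊆ G` nonempty with
`|A| = α`, `t` a positive integer with `αt ≤ q`. Then there exists `X ⊆ G` with `|X| ≤ t` and
`|A + X| ≥ αt(1 - αt/(2q))`. -/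
theorem stmt18 {G : Type*} [AddCommGroup G] [Fintype G] [DecidableEq G]
    (q : ℕ) (hq : Fintype.card G = q) (A : Finset G) (hA : A.Nonempty)
    (α t : ℕ) (hα : A.card = α) (ht : 0 < t) (htq : α * t ≤ q) :
    ∃ X : Finset G, X.card ≤ t ∧
      ((A + X).card : ℝ) ≥ (α : ℝ) * t * (1 - (α : ℝ) * t / (2 * q)) := by
  subst hq hα
  have hq0 : 0 < Fintype.card G := Fintype.card_pos
  set q : ℕ := Fintype.card G with hq
  set α : ℕ := A.card with hα
  have hQ0 : (0:ℝ) < (q:ℝ) := by exact_mod_cast hq0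
  have hαq : (α:ℝ) ≤ (q:ℝ) := by
    exact_mod_cast le_trans (Finset.card_le_card (Finset.subset_univ A))
      (le_of_eq (Finset.card_univ))
  have hα0 : (0:ℝ) ≤ (α:ℝ) := by positivity
  -- main induction
  have main : ∀ k : ℕ, ∃ X : Finset G, X.card ≤ k ∧
      ((A + X).card : ℝ) ≥ k * α - (k * α)^2 / (2 * q) := by
    intro k
    induction k with
    | zero =>
      refine ⟨∅, le_refl _, ?_⟩
      simp
    | succ k ih =>
      obtain ⟨X, hXc, hXb⟩ := ih
      obtain ⟨x, hx⟩ := stmt18_step A X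
      refine ⟨insert x X, le_trans (Finset.card_insert_le _ _) (by omega), ?_⟩
      set S := A + X with hS
      have hSle : S.card ≤ q := le_trans (Finset.card_le_card (Finset.subset_univ S))
        (le_of_eq Finset.card_univ)
      -- A + insert x X contains S ∪ ((A+{x}) \ S)
      have hsub1 : S ⊆ A + insert x X :=
        Finset.add_subset_add_left (Finset.subset_insert x X)
      have hsub2 : (A + {x}) ⊆ A + insert x X :=
        Finset.add_subset_add_left (by simp)
      have hcard : S.card + ((A + {x}) \ S).card ≤ (A + insert x X).card := by
        rw [← Finset.card_union_of_disjoint Finset.disjoint_sdiff]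
        exact Finset.card_le_card (Finset.union_subset hsub1
          (le_trans (Finset.sdiff_subset) hsub2))
      -- cast to reals
      have hx' : (α:ℝ) * ((q:ℝ) - S.card) ≤ (q:ℝ) * (((A + {x}) \ S).card : ℝ) := by
        have := hx
        have hcast : ((q - S.card : ℕ) : ℝ) = (q:ℝ) - (S.card:ℝ) := by
          rw [Nat.cast_sub hSle]
        calc (α:ℝ) * ((q:ℝ) - S.card) = ((α * (q - S.card) : ℕ) : ℝ) := by
              push_cast [Nat.cast_sub hSle]; ring
          _ ≤ ((q * ((A + {x}) \ S).card : ℕ) : ℝ) := by exact_mod_cast this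
          _ = (q:ℝ) * (((A + {x}) \ S).card : ℝ) := by push_cast; ring
      have hcard' : (S.card : ℝ) + (((A + {x}) \ S).card : ℝ) ≤ ((A + insert x X).card : ℝ) := by
        exact_mod_cast hcard
      -- so |A + insert x X| ≥ S.card + α(q - S.card)/q = S.card (1 - α/q) + α
      have hmain : ((A + insert x X).card : ℝ) ≥ (S.card : ℝ) * (1 - α/q) + α := by
        have h1 : (α:ℝ) * ((q:ℝ) - S.card) / q ≤ (((A + {x}) \ S).card : ℝ) := by
          rw [div_le_iff₀ hQ0]
          linarith [hx']
        have : (S.card : ℝ) * (1 - α/q) + α = (S.card : ℝ) + (α:ℝ) * ((q:ℝ) - S.card) / q := by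
          field_simp
          ring
        rw [this]
        linarith [hcard', h1]
      -- monotone in S.card since 1 - α/q ≥ 0
      have hcoef : (0:ℝ) ≤ 1 - α/q := by
        rw [sub_nonneg, div_le_one hQ0]; exact hαq
      have hmono : ((k:ℝ) * α - (k * α:ℝ)^2 / (2*q)) * (1 - α/q) + α ≤
          (S.card : ℝ) * (1 - α/q) + α := by
        have := mul_le_mul_of_nonneg_right hXb hcoef
        linarith
      -- algebra: b(k)(1-α/q)+α ≥ b(k+1)
      have halg : ((k+1:ℕ):ℝ) * α - (((k+1:ℕ):ℝ) * α)^2 / (2*q) ≤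
          ((k:ℝ) * α - ((k:ℝ) * α)^2 / (2*q)) * (1 - α/q) + α := by
        push_cast
        have e : ((k:ℝ)*α - ((k:ℝ)*α)^2/(2*q))*(1-(α:ℝ)/q)+α -
            (((k:ℝ)+1)*α - (((k:ℝ)+1)*α)^2/(2*q)) =
            (k:ℝ)^2*(α:ℝ)^3/(2*(q:ℝ)^2) + (α:ℝ)^2/(2*q) := by
          field_simp
          ring
        have hpos : (0:ℝ) ≤ (k:ℝ)^2*(α:ℝ)^3/(2*(q:ℝ)^2) + (α:ℝ)^2/(2*q) := by positivity
        linarith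
      push_cast at halg ⊢
      linarith [hmain, hmono, halg]
  obtain ⟨X, hX1, hX2⟩ := main t
  refine ⟨X, hX1, ?_⟩
  have : (α : ℝ) * t * (1 - (α : ℝ) * t / (2 * q)) = (t:ℝ) * α - ((t:ℝ) * α)^2 / (2*q) := by
    ring
  rw [this]
  exact hX2
end
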